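/- arXiv:2601.20736 — 4 statements merged into one kernel-verified Lean document; each statement's English description precedes it below -/
import Mathlib

section
/- Let 1 < p < q < ∞, a(x) ≥ 0, and φ(x,t) = (1/p)t^p + (1/q)a(x)t^q. Let φ*(x,s) = sup_{t ≥ 0}(st − φ(x,t)) be the convex conjugate in the t-variable. Then there exist constants c₁, c₂ > 0 depending only on p and q such that for all x and s ≥ 0, c₁·min(s^{p'}, a(x)^{1-q'} s^{q'}) ≤ φ*(x,s) ≤ c₂·min(s^{p'}, a(x)^{1-q'} s^{q'}), where p' = p/(p-1), q' = q/(q-1), and 0^{1-q'} is interpreted as ∞ (so that a(x)^{1-q'}s^{q'} = ∞·s^{q'} is ignored in the min when a(x)=0 and s>0; when a(x)=0 the bound reads c₁ s^{p'} ≤ φ*(x,s) ≤ c₂ s^{p'}). -/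
/-!
Upper bound: Young's inequality, applied to `(t, s)` and to the rescaled pair
`(a^(1/q) t, a^(-1/q) s)`, bounds `s t - φ(x,t)` by `s^p'` and by `a^(1-q') s^q'`.

Lower bound: for `u = min (s^(1/(p-1))) ((s/a)^(1/(q-1)))` one has
`s u = min (s^p') (a^(1-q') s^q')`, while `u^(p-1) ≤ s` and `a u^(q-1) ≤ s`. Hence at
`t = ε u` with `ε^(p-1) = 1/4` each term of `φ(x,t)` is at most `s t / 4`, so
`φ*(x,s) ≥ s t / 2 = (ε/2) s u`.
-/

noncomputable def conjFn {n : ℕ} (φ : (Fin n → ℝ) → ℝ → ℝ) :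
    (Fin n → ℝ) → ℝ → ℝ :=
  fun x s => sSup {y : ℝ | ∃ t : ℝ, 0 ≤ t ∧ y = s * t - φ x t}

theorem conjFn_le {n : ℕ} {φ : (Fin n → ℝ) → ℝ → ℝ} {x : Fin n → ℝ} {s C : ℝ}
    (h : ∀ t, 0 ≤ t → s * t - φ x t ≤ C) : conjFn φ x s ≤ C :=
  csSup_le ⟨_, 0, le_rfl, rfl⟩ fun _ ⟨t, ht, hy⟩ => hy ▸ h t ht

theorem le_conjFn {n : ℕ} {φ : (Fin n → ℝ) → ℝ → ℝ} {x : Fin n → ℝ} {s C t : ℝ}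
    (h : ∀ t, 0 ≤ t → s * t - φ x t ≤ C) (ht : 0 ≤ t) : s * t - φ x t ≤ conjFn φ x s :=
  le_csSup ⟨C, fun _ ⟨t, ht, hy⟩ => hy ▸ h t ht⟩ ⟨t, ht, rfl⟩

/-- Young's inequality applied to `(b^(1/r) t) * (b^(-1/r) s)`. -/
theorem mul_sub_mul_rpow_div_le {r r' b s t : ℝ} (h : r.HolderConjugate r') (hb : 0 < b)
    (hs : 0 ≤ s) (ht : 0 ≤ t) : s * t - b * t ^ r / r ≤ b ^ (1 - r') * s ^ r' := by
  have young := Real.young_inequality_of_nonneg (mul_nonneg (Real.rpow_nonneg hb.le r⁻¹) ht)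
    (mul_nonneg (Real.rpow_nonneg hb.le (-r⁻¹)) hs) h
  have hprod : b ^ r⁻¹ * t * (b ^ (-r⁻¹) * s) = s * t := by
    rw [mul_mul_mul_comm, ← Real.rpow_add hb, add_neg_cancel, Real.rpow_zero, one_mul, mul_comm]
  have hleft : (b ^ r⁻¹ * t) ^ r = b * t ^ r := by
    rw [Real.mul_rpow (Real.rpow_nonneg hb.le _) ht, Real.rpow_inv_rpow hb.le h.ne_zero]
  have hright : (b ^ (-r⁻¹) * s) ^ r' = b ^ (1 - r') * s ^ r' := by
    rw [Real.mul_rpow (Real.rpow_nonneg hb.le _) hs, ← Real.rpow_mul hb.le]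
    congr 2
    have := h.inv_add_inv_eq_one
    field_simp [h.ne_zero, h.symm.ne_zero] at this ⊢
    linarith
  have hdiv : b ^ (1 - r') * s ^ r' / r' ≤ b ^ (1 - r') * s ^ r' :=
    div_le_self (by positivity) h.symm.lt.le
  rw [hprod, hleft, hright] at young
  linarith

theorem mul_div_rpow_inv_sub_one {r b s : ℝ} (hr : 1 < r) (hb : 0 ≤ b) (hs : 0 ≤ s) :
    s * (s / b) ^ (r - 1)⁻¹ = b ^ (1 - r / (r - 1)) * s ^ (r / (r - 1)) := by
  have hr1 : 0 < r - 1 := sub_pos.2 hr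
  have hexp : r / (r - 1) = 1 + (r - 1)⁻¹ := by field_simp; ring
  have hexp' : 1 - r / (r - 1) = -(r - 1)⁻¹ := by field_simp; ring
  rw [Real.div_rpow hs hb, hexp', Real.rpow_neg hb, hexp,
    Real.rpow_add' hs (by positivity), Real.rpow_one]
  ring

theorem mul_rpow_le_of_mul_rpow_sub_one_le {r b s ε u : ℝ} (hr : r ≠ 0) (hε : 0 ≤ ε)
    (hu : 0 ≤ u) (h : b * u ^ (r - 1) ≤ s) : b * (ε * u) ^ r ≤ ε ^ (r - 1) * (s * (ε * u)) := by
  have hsplit : (ε * u) ^ r = ε ^ (r - 1) * u ^ (r - 1) * (ε * u) := by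
    rw [← Real.mul_rpow hε hu, ← Real.rpow_add_one' (mul_nonneg hε hu) (by simpa using hr),
      sub_add_cancel]
  rw [hsplit]
  have := mul_le_mul_of_nonneg_left h
    (mul_nonneg (Real.rpow_nonneg hε (r - 1)) (mul_nonneg hε hu))
  linarith

section DoublePhase

variable {p q A s : ℝ}

noncomputable def doublePhaseConjBound (p q A s : ℝ) : ℝ :=
  if A = 0 then s ^ (p / (p - 1))
  else min (s ^ (p / (p - 1))) (A ^ (1 - q / (q - 1)) * s ^ (q / (q - 1)))

theorem mul_sub_doublePhase_le {t : ℝ} (hp : 1 < p) (hq : 1 < q) (hA : 0 ≤ A) (hs : 0 ≤ s)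
    (ht : 0 ≤ t) :
    s * t - (1 / p * t ^ p + 1 / q * A * t ^ q) ≤ doublePhaseConjBound p q A s := by
  have hpterm : s * t - 1 / p * t ^ p ≤ s ^ (p / (p - 1)) := by
    have := mul_sub_mul_rpow_div_le ((Real.holderConjugate_iff_eq_conjExponent hp).2 rfl)
      one_pos hs ht
    rw [Real.one_rpow, one_mul, one_mul] at this
    linarith [show t ^ p / p = 1 / p * t ^ p by ring]
  have hqnonneg : 0 ≤ 1 / q * A * t ^ q := by positivity
  unfold doublePhaseConjBound
  split_ifs with hA0
  · linarith
  · have hqterm := mul_sub_mul_rpow_div_le ((Real.holderConjugate_iff_eq_conjExponent hq).2 rfl)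
      (lt_of_le_of_ne hA (Ne.symm hA0)) hs ht
    have hpnonneg : 0 ≤ 1 / p * t ^ p := by positivity
    have hform : A * t ^ q / q = 1 / q * A * t ^ q := by ring
    exact le_min (by linarith) (by linarith)

noncomputable def doublePhaseTestPoint (p q A s : ℝ) : ℝ :=
  if A = 0 then s ^ (p - 1)⁻¹ else min (s ^ (p - 1)⁻¹) ((s / A) ^ (q - 1)⁻¹)

theorem doublePhaseTestPoint_nonneg (hA : 0 ≤ A) (hs : 0 ≤ s) :
    0 ≤ doublePhaseTestPoint p q A s := by
  unfold doublePhaseTestPoint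
  split_ifs <;> positivity

theorem mul_doublePhaseTestPoint (hp : 1 < p) (hq : 1 < q) (hA : 0 ≤ A) (hs : 0 ≤ s) :
    s * doublePhaseTestPoint p q A s = doublePhaseConjBound p q A s := by
  have hpterm : s * s ^ (p - 1)⁻¹ = s ^ (p / (p - 1)) := by
    simpa using mul_div_rpow_inv_sub_one hp zero_le_one hs
  unfold doublePhaseTestPoint doublePhaseConjBound
  split_ifs
  · exact hpterm
  · rw [mul_min_of_nonneg _ _ hs, hpterm, mul_div_rpow_inv_sub_one hq hA hs]

theorem doublePhaseTestPoint_rpow_le (hp : 1 < p) (hA : 0 ≤ A) (hs : 0 ≤ s) :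
    doublePhaseTestPoint p q A s ^ (p - 1) ≤ s := by
  rw [← Real.le_rpow_inv_iff_of_pos (doublePhaseTestPoint_nonneg hA hs) hs (sub_pos.2 hp)]
  unfold doublePhaseTestPoint
  split_ifs
  · exact le_rfl
  · exact min_le_left _ _

theorem mul_doublePhaseTestPoint_rpow_le (hq : 1 < q) (hA : 0 ≤ A) (hs : 0 ≤ s) :
    A * doublePhaseTestPoint p q A s ^ (q - 1) ≤ s := by
  rcases hA.eq_or_lt with rfl | hA0
  · simpa using hs
  have hu : doublePhaseTestPoint p q A s ≤ (s / A) ^ (q - 1)⁻¹ := by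
    unfold doublePhaseTestPoint
    rw [if_neg hA0.ne']
    exact min_le_right _ _
  rw [Real.le_rpow_inv_iff_of_pos (doublePhaseTestPoint_nonneg hA hs) (div_nonneg hs hA)
    (sub_pos.2 hq), le_div_iff₀ hA0] at hu
  linarith

theorem exists_le_mul_sub_doublePhase (hp : 1 < p) (hpq : p < q) :
    ∃ c > 0, ∀ A s : ℝ, 0 ≤ A → 0 ≤ s → ∃ t ≥ 0,
      c * doublePhaseConjBound p q A s ≤ s * t - (1 / p * t ^ p + 1 / q * A * t ^ q) := by
  have hq : 1 < q := hp.trans hpq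
  set ε : ℝ := (4⁻¹ : ℝ) ^ (p - 1)⁻¹
  have hε : 0 < ε := by positivity
  have hεp : ε ^ (p - 1) = 4⁻¹ := Real.rpow_inv_rpow (by norm_num) (sub_pos.2 hp).ne'
  have hεq : ε ^ (q - 1) ≤ 4⁻¹ :=
    hεp ▸ Real.rpow_le_rpow_of_exponent_ge hε
      (Real.rpow_le_one (by norm_num) (by norm_num) (inv_nonneg.2 (sub_pos.2 hp).le))
      (by linarith)
  refine ⟨ε / 2, half_pos hε, fun A s hA hs => ?_⟩
  set u := doublePhaseTestPoint p q A s
  have hu : 0 ≤ u := doublePhaseTestPoint_nonneg hA hs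
  have hst : 0 ≤ s * (ε * u) := by positivity
  have hpterm : 1 * (ε * u) ^ p ≤ ε ^ (p - 1) * (s * (ε * u)) :=
    mul_rpow_le_of_mul_rpow_sub_one_le (by linarith) hε.le hu
      ((one_mul _).trans_le (doublePhaseTestPoint_rpow_le hp hA hs))
  have hqterm : A * (ε * u) ^ q ≤ ε ^ (q - 1) * (s * (ε * u)) :=
    mul_rpow_le_of_mul_rpow_sub_one_le (by linarith) hε.le hu
      (mul_doublePhaseTestPoint_rpow_le hq hA hs)
  have hpdiv : 1 / p * (ε * u) ^ p ≤ (ε * u) ^ p :=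
    mul_le_of_le_one_left (by positivity) (by rw [div_le_one] <;> linarith)
  have hqdiv : 1 / q * A * (ε * u) ^ q ≤ A * (ε * u) ^ q := by
    rw [mul_assoc]
    exact mul_le_of_le_one_left (by positivity) (by rw [div_le_one] <;> linarith)
  refine ⟨ε * u, by positivity, ?_⟩
  rw [hεp] at hpterm
  rw [← mul_doublePhaseTestPoint hp hq hA hs]
  linarith [mul_le_mul_of_nonneg_right hεq hst]

end DoublePhase

/-- For the double phase function `φ(x,t) = (1/p)t^p + (1/q)a(x)t^q`
with `1 < p < q` and `a ≥ 0`, there are constants `c₁, c₂ > 0` depending only on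
`p, q` such that `c₁·min(s^p', a(x)^(1-q')·s^q') ≤ φ*(x,s) ≤ c₂·min(s^p', a(x)^(1-q')·s^q')`
for all `s ≥ 0`, where `p' = p/(p-1)`, `q' = q/(q-1)`, and with the convention
`0^(1-q') = ∞` (so when `a(x) = 0` the bound reads `c₁ s^p' ≤ φ*(x,s) ≤ c₂ s^p'`). -/
theorem double_phase_conjugate_formula (n : ℕ) (p q : ℝ) (hp : 1 < p) (hpq : p < q) :
    ∃ c₁ c₂ : ℝ, 0 < c₁ ∧ 0 < c₂ ∧
      ∀ (a : (Fin n → ℝ) → ℝ), (∀ x, 0 ≤ a x) →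
      ∀ (φ : (Fin n → ℝ) → ℝ → ℝ),
        (∀ x t, φ x t = (1 / p) * t ^ p + (1 / q) * a x * t ^ q) →
      ∀ (x : Fin n → ℝ) (s : ℝ), 0 ≤ s →
        c₁ * (if a x = 0 then s ^ (p / (p - 1))
              else min (s ^ (p / (p - 1)))
                ((a x) ^ (1 - q / (q - 1)) * s ^ (q / (q - 1))))
            ≤ conjFn φ x s ∧
        conjFn φ x s
            ≤ c₂ * (if a x = 0 then s ^ (p / (p - 1))
              else min (s ^ (p / (p - 1)))
                ((a x) ^ (1 - q / (q - 1)) * s ^ (q / (q - 1)))) := by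
  obtain ⟨c, hc, hlower⟩ := exists_le_mul_sub_doublePhase hp hpq
  refine ⟨c, 1, hc, one_pos, fun a ha φ hφ x s hs => ?_⟩
  have hupper : ∀ t, 0 ≤ t → s * t - φ x t ≤ doublePhaseConjBound p q (a x) s := fun t ht =>
    hφ x t ▸ mul_sub_doublePhase_le hp (hp.trans hpq) (ha x) hs ht
  obtain ⟨t, ht, hct⟩ := hlower (a x) s (ha x) hs
  refine ⟨hct.trans (hφ x t ▸ le_conjFn hupper ht), ?_⟩
  rw [one_mul]
  exact conjFn_le hupper
end

section
/- Let 1 < p < q < ∞ with q/p ≤ 1 + α/n for some α > 0, and let a ∈ L^∞(ℝ^n) be nonnegative and satisfy a(x) ≤ C₀(a(y) + |x−y|^α) for all x, y in any cube of measure at most 1. Then for every cube Q with |Q| ≤ 1 and every measurable f with ‖f‖_{L^p(ℝ^n)} ≤ 1, ⨍_Q φ(x, ⨍_Q |f| dy) dx ≤ C ⨍_Q φ(x,|f(x)|) dx, where φ(x,t) = (1/p)t^p + (1/q)a(x)t^q and C depends only on n, p, q, α, C₀, ‖a‖_∞. -/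
/-!
Let `t = ⨍_Q |f|` and `A = inf_Q a`; the Hölder-type condition gives `a ≤ C₀ (A + ℓ ^ α)` on `Q`.
Jensen for `s ↦ s ^ p` and `‖f‖_p ≤ 1` give `ℓ ^ n t ^ p ≤ 1`, which the gap condition
`n (q - p) / p ≤ α` turns into `ℓ ^ α t ^ q ≤ t ^ p`. Hence `φ(x, t) ≤ (1 + C₀) φ_A(t)` on `Q`,
where `φ_A(s) = s ^ p / p + A s ^ q / q` has the coefficient frozen at `A`. Since `φ_A` is convex,
Jensen gives `|Q| φ_A(t) ≤ ∫_Q φ_A(|f|)`, and `φ_A(s) ≤ φ(x, s)` on `Q`.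
-/

open MeasureTheory

/-- The axis-parallel cube with lower corner `z` and sidelength `ℓ`. -/
def cube (n : ℕ) (z : Fin n → ℝ) (ℓ : ℝ) : Set (Fin n → ℝ) :=
  {x | ∀ i, z i ≤ x i ∧ x i ≤ z i + ℓ}

open Set

theorem le_mul_sInf_add_of_forall_le {X : Type*} {s : Set X} {a : X → ℝ} {C δ : ℝ} (hC : 0 < C)
    (hs : s.Nonempty) (h : ∀ x ∈ s, ∀ y ∈ s, a x ≤ C * (a y + δ))
    {x : X} (hx : x ∈ s) : a x ≤ C * (sInf (a '' s) + δ) := by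
  have : a x / C - δ ≤ sInf (a '' s) := by
    refine le_csInf (hs.image a) ?_
    rintro _ ⟨y, hy, rfl⟩
    rw [sub_le_iff_le_add, div_le_iff₀' hC]
    exact h x hx y hy
  rw [div_sub' hC.ne', div_le_iff₀ hC] at this
  linarith

theorem rpow_mul_rpow_le_rpow {ℓ t s p q α : ℝ} (hℓ : 0 < ℓ) (hℓ1 : ℓ ≤ 1) (ht : 0 ≤ t)
    (hp : 0 < p) (hpq : p ≤ q) (hsα : s * (q - p) / p ≤ α) (h : ℓ ^ s * t ^ p ≤ 1) :
    ℓ ^ α * t ^ q ≤ t ^ p := by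
  have hqp : 0 ≤ (q - p) / p := div_nonneg (sub_nonneg.2 hpq) hp.le
  have hsplit : t ^ q = t ^ p * t ^ (q - p) := by
    rw [← Real.rpow_add' ht (by linarith)]; ring_nf
  have hgap : ℓ ^ α * t ^ (q - p) ≤ 1 :=
    calc ℓ ^ α * t ^ (q - p) ≤ ℓ ^ (s * (q - p) / p) * t ^ (q - p) := by
          gcongr ?_ * _
          exact Real.rpow_le_rpow_of_exponent_ge hℓ hℓ1 hsα
      _ = (ℓ ^ s * t ^ p) ^ ((q - p) / p) := by
          rw [Real.mul_rpow (by positivity) (by positivity), ← Real.rpow_mul hℓ.le,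
            ← Real.rpow_mul ht, mul_div_assoc, mul_div_cancel₀ _ hp.ne']
      _ ≤ 1 := Real.rpow_le_one (by positivity) h hqp
  calc ℓ ^ α * t ^ q = t ^ p * (ℓ ^ α * t ^ (q - p)) := by rw [hsplit]; ring
    _ ≤ t ^ p := mul_le_of_le_one_right (by positivity) hgap

theorem mul_sub_div_le_of_div_le_one_add_div {s p q α : ℝ} (hs : 0 < s) (hp : 0 < p)
    (h : q / p ≤ 1 + α / s) : s * (q - p) / p ≤ α := by
  rw [div_le_iff₀ hp]
  rw [div_le_iff₀ hp] at h
  calc s * (q - p) ≤ s * (α / s * p) := by gcongr; linarith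
    _ = α * p := by field_simp

noncomputable def doublePhase (p q c t : ℝ) : ℝ :=
  1 / p * t ^ p + 1 / q * c * t ^ q

section DoublePhase

variable {p q c t : ℝ}

theorem doublePhase_zero (hp : p ≠ 0) (hq : q ≠ 0) : doublePhase p q c 0 = 0 := by
  simp [doublePhase, Real.zero_rpow hp, Real.zero_rpow hq]

theorem doublePhase_nonneg (hp : 0 ≤ p) (hq : 0 ≤ q) (hc : 0 ≤ c) (ht : 0 ≤ t) :
    0 ≤ doublePhase p q c t := by
  unfold doublePhase
  positivity

theorem doublePhase_le_doublePhase_of_le {c' : ℝ} (hq : 0 ≤ q) (ht : 0 ≤ t) (hcc' : c ≤ c') :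
    doublePhase p q c t ≤ doublePhase p q c' t := by
  unfold doublePhase
  gcongr

theorem continuous_doublePhase (hp : 0 ≤ p) (hq : 0 ≤ q) : Continuous (doublePhase p q c) :=
  ((Real.continuous_rpow_const hp).const_mul _).add ((Real.continuous_rpow_const hq).const_mul _)

theorem convexOn_doublePhase (hp : 1 ≤ p) (hq : 1 ≤ q) (hc : 0 ≤ c) :
    ConvexOn ℝ (Ici 0) (doublePhase p q c) :=
  ((convexOn_rpow hp).smul (by positivity : (0 : ℝ) ≤ 1 / p)).add
    ((convexOn_rpow hq).smul (by positivity : (0 : ℝ) ≤ 1 / q * c))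

/-- The part `C₀ δ t ^ q` of the `q`-phase is absorbed into the `p`-phase. -/
theorem doublePhase_le_mul_doublePhase {A C₀ δ : ℝ} (hp : 0 < p) (hpq : p ≤ q) (hC₀ : 0 ≤ C₀)
    (hA : 0 ≤ A) (ht : 0 ≤ t) (hc : c ≤ C₀ * (A + δ)) (hδ : δ * t ^ q ≤ t ^ p) :
    doublePhase p q c t ≤ (1 + C₀) * doublePhase p q A t := by
  have hq : 0 < q := hp.trans_le hpq
  unfold doublePhase
  calc 1 / p * t ^ p + 1 / q * c * t ^ q
      ≤ 1 / p * t ^ p + 1 / q * (C₀ * (A + δ)) * t ^ q := by gcongr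
    _ = 1 / p * t ^ p + C₀ / q * (δ * t ^ q) + C₀ * (1 / q * A * t ^ q) := by ring
    _ ≤ 1 / p * t ^ p + C₀ / q * t ^ p + C₀ * (1 / q * A * t ^ q) := by gcongr
    _ ≤ 1 / p * t ^ p + C₀ / p * t ^ p + C₀ * (1 / q * A * t ^ q) := by gcongr
    _ = (1 + C₀) * (1 / p * t ^ p) + C₀ * (1 / q * A * t ^ q) := by ring
    _ ≤ (1 + C₀) * (1 / p * t ^ p) + (1 + C₀) * (1 / q * A * t ^ q) := by gcongr; linarith
    _ = (1 + C₀) * (1 / p * t ^ p + 1 / q * A * t ^ q) := by ring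

end DoublePhase

/-- Jensen's inequality without integrability assumptions: if `g` is not integrable, its average
is the junk value `0`; if `ψ ∘ g` is not, the right-hand side is `∞`. -/
theorem ofReal_measureReal_mul_map_average_le_lintegral {X : Type*} [MeasurableSpace X]
    {μ : Measure X} [IsFiniteMeasure μ] {ψ : ℝ → ℝ} (hψ : ConvexOn ℝ (Ici 0) ψ)
    (hψc : Continuous ψ) (hψ0 : ψ 0 = 0) (hψnn : ∀ t, 0 ≤ t → 0 ≤ ψ t) {g : X → ℝ}
    (hg : 0 ≤ᵐ[μ] g) :
    ENNReal.ofReal (μ.real univ * ψ (⨍ x, g x ∂μ)) ≤ ∫⁻ x, ENNReal.ofReal (ψ (g x)) ∂μ := by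
  rcases eq_zero_or_neZero μ with rfl | _
  · simp
  by_cases hgi : Integrable g μ
  swap
  · simp [average_eq, integral_undef hgi, hψ0]
  have hψg : 0 ≤ᵐ[μ] fun x => ψ (g x) := hg.mono fun x hx => hψnn _ hx
  by_cases hψgi : Integrable (fun x => ψ (g x)) μ
  swap
  · have : ∫⁻ x, ENNReal.ofReal (ψ (g x)) ∂μ = ⊤ := by
      by_contra h
      exact hψgi ((lintegral_ofReal_ne_top_iff_integrable
        (hψc.comp_aestronglyMeasurable hgi.1) hψg).1 h)
    rw [this]
    exact le_top
  calc ENNReal.ofReal (μ.real univ * ψ (⨍ x, g x ∂μ))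
      ≤ ENNReal.ofReal (μ.real univ * ⨍ x, ψ (g x) ∂μ) := by
        gcongr
        exact hψ.map_average_le hψc.continuousOn isClosed_Ici hg hgi hψgi
    _ = ENNReal.ofReal (∫ x, ψ (g x) ∂μ) := by rw [← measure_smul_average, smul_eq_mul]
    _ = ∫⁻ x, ENNReal.ofReal (ψ (g x)) ∂μ := ofReal_integral_eq_lintegral_ofReal hψgi hψg

section Cube

variable {n : ℕ} {z : Fin n → ℝ} {ℓ : ℝ}

theorem cube_eq_pi : cube n z ℓ = univ.pi fun i => Icc (z i) (z i + ℓ) := by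
  ext x
  simp [cube, Pi.le_def, forall_and]

theorem measurableSet_cube : MeasurableSet (cube n z ℓ) := by
  rw [cube_eq_pi]
  exact .univ_pi fun _ => measurableSet_Icc

theorem volume_cube (hℓ : 0 ≤ ℓ) : volume (cube n z ℓ) = ENNReal.ofReal (ℓ ^ n) := by
  rw [cube_eq_pi, volume_pi_pi]
  simp [Real.volume_Icc, ENNReal.ofReal_pow hℓ]

theorem volume_real_cube (hℓ : 0 ≤ ℓ) : volume.real (cube n z ℓ) = ℓ ^ n := by
  rw [measureReal_def, volume_cube hℓ, ENNReal.toReal_ofReal (by positivity)]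

theorem mem_cube_self (hℓ : 0 ≤ ℓ) : z ∈ cube n z ℓ :=
  fun _ => ⟨le_rfl, le_add_of_nonneg_right hℓ⟩

theorem norm_sub_le_of_mem_cube (hℓ : 0 ≤ ℓ) {x y : Fin n → ℝ} (hx : x ∈ cube n z ℓ)
    (hy : y ∈ cube n z ℓ) : ‖x - y‖ ≤ ℓ := by
  refine (pi_norm_le_iff_of_nonneg hℓ).2 fun i => ?_
  rw [Pi.sub_apply, Real.norm_eq_abs, abs_le]
  constructor <;> linarith [hx i, hy i]

theorem ofReal_pow_mul_map_le_setLIntegral_cube {ψ : ℝ → ℝ} (hψ : ConvexOn ℝ (Ici 0) ψ)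
    (hψc : Continuous ψ) (hψ0 : ψ 0 = 0) (hψnn : ∀ t, 0 ≤ t → 0 ≤ ψ t) (hℓ : 0 ≤ ℓ)
    {g : (Fin n → ℝ) → ℝ} (hg : ∀ x, 0 ≤ g x) :
    ENNReal.ofReal (ℓ ^ n * ψ ((ℓ ^ n)⁻¹ * ∫ y in cube n z ℓ, g y))
      ≤ ∫⁻ x in cube n z ℓ, ENNReal.ofReal (ψ (g x)) := by
  have : IsFiniteMeasure (volume.restrict (cube n z ℓ)) :=
    isFiniteMeasure_restrict.2 (by rw [volume_cube hℓ]; exact ENNReal.ofReal_ne_top)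
  have := ofReal_measureReal_mul_map_average_le_lintegral hψ hψc hψ0 hψnn
    (μ := volume.restrict (cube n z ℓ)) (ae_of_all _ hg)
  rwa [measureReal_restrict_apply_univ, setAverage_eq, smul_eq_mul, volume_real_cube hℓ] at this

theorem le_mul_sInf_image_cube_add_rpow {a : (Fin n → ℝ) → ℝ} {C₀ α : ℝ} (hℓ : 0 ≤ ℓ)
    (hα : 0 ≤ α) (hC₀ : 0 < C₀)
    (h : ∀ x ∈ cube n z ℓ, ∀ y ∈ cube n z ℓ, a x ≤ C₀ * (a y + ‖x - y‖ ^ α))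
    {x : Fin n → ℝ} (hx : x ∈ cube n z ℓ) : a x ≤ C₀ * (sInf (a '' cube n z ℓ) + ℓ ^ α) := by
  refine le_mul_sInf_add_of_forall_le hC₀ ⟨z, mem_cube_self hℓ⟩ (fun x hx y hy => ?_) hx
  calc a x ≤ C₀ * (a y + ‖x - y‖ ^ α) := h x hx y hy
    _ ≤ C₀ * (a y + ℓ ^ α) := by gcongr; exact norm_sub_le_of_mem_cube hℓ hx hy

theorem ofReal_pow_mul_doublePhase_le_setLIntegral_cube {p q c : ℝ} (hp : 1 ≤ p) (hq : 1 ≤ q)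
    (hc : 0 ≤ c) (hℓ : 0 ≤ ℓ) {g : (Fin n → ℝ) → ℝ} (hg : ∀ x, 0 ≤ g x) :
    ENNReal.ofReal (ℓ ^ n * doublePhase p q c ((ℓ ^ n)⁻¹ * ∫ y in cube n z ℓ, g y))
      ≤ ∫⁻ x in cube n z ℓ, ENNReal.ofReal (doublePhase p q c (g x)) :=
  ofReal_pow_mul_map_le_setLIntegral_cube (convexOn_doublePhase hp hq hc)
    (continuous_doublePhase (by linarith) (by linarith))
    (doublePhase_zero (by linarith) (by linarith))
    (fun _ hs => doublePhase_nonneg (by linarith) (by linarith) hc hs) hℓ hg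

theorem pow_mul_rpow_setAverage_le_one {p : ℝ} (hp : 1 ≤ p) (hℓ : 0 ≤ ℓ)
    {f : (Fin n → ℝ) → ℝ} (hf : ∫⁻ x, ENNReal.ofReal (|f x| ^ p) ≤ 1) :
    ℓ ^ n * ((ℓ ^ n)⁻¹ * ∫ y in cube n z ℓ, |f y|) ^ p ≤ 1 := by
  have hp0 : 0 < p := by linarith
  rw [← ENNReal.ofReal_le_one]
  calc _ ≤ ∫⁻ x in cube n z ℓ, ENNReal.ofReal (|f x| ^ p) :=
        ofReal_pow_mul_map_le_setLIntegral_cube (convexOn_rpow hp)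
          (Real.continuous_rpow_const hp0.le) (Real.zero_rpow hp0.ne')
          (fun s hs => Real.rpow_nonneg hs p) hℓ fun x => abs_nonneg (f x)
    _ ≤ 1 := (setLIntegral_le_lintegral _ _).trans hf

end Cube

theorem double_phase_jensen_small_cubes_general (n : ℕ) (hn : 0 < n) (p q α : ℝ)
    (hp : 1 < p) (hpq : p < q) (hα : 0 < α) (hgap : q / p ≤ 1 + α / n)
    (C₀ : ℝ) (hC₀ : 0 < C₀)
    (a : (Fin n → ℝ) → ℝ) (ha : ∀ x, 0 ≤ a x)
    (hahold : ∀ (z : Fin n → ℝ) (ℓ : ℝ), 0 < ℓ → ℓ ^ n ≤ 1 →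
      ∀ x ∈ cube n z ℓ, ∀ y ∈ cube n z ℓ, a x ≤ C₀ * (a y + ‖x - y‖ ^ α))
    (φ : (Fin n → ℝ) → ℝ → ℝ)
    (hφ : ∀ x t, φ x t = (1 / p) * t ^ p + (1 / q) * a x * t ^ q) :
    ∃ C : ℝ, 0 < C ∧
      ∀ (f : (Fin n → ℝ) → ℝ), Measurable f → (∫⁻ x, ENNReal.ofReal (|f x| ^ p)) ≤ 1 →
      ∀ (z : Fin n → ℝ) (ℓ : ℝ), 0 < ℓ → ℓ ^ n ≤ 1 →
        (∫⁻ x in cube n z ℓ,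
            ENNReal.ofReal (φ x ((ℓ ^ n)⁻¹ * ∫ y in cube n z ℓ, |f y|)))
          ≤ ENNReal.ofReal C *
            ∫⁻ x in cube n z ℓ, ENNReal.ofReal (φ x |f x|) := by
  obtain rfl : φ = fun x => doublePhase p q (a x) := funext₂ hφ
  have hp0 : 0 < p := by linarith
  refine ⟨1 + C₀, by positivity, fun f _ hfp z ℓ hℓ hℓn => ?_⟩
  set Q := cube n z ℓ
  set t := (ℓ ^ n)⁻¹ * ∫ y in Q, |f y|
  set A := sInf (a '' Q)
  have ht : 0 ≤ t := by positivity
  have hA : 0 ≤ A := Real.sInf_nonneg (forall_mem_image.2 fun y _ => ha y)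
  have hLp : ℓ ^ (n : ℝ) * t ^ p ≤ 1 := by
    simpa only [Real.rpow_natCast] using pow_mul_rpow_setAverage_le_one hp.le hℓ.le hfp
  have hkey : ℓ ^ α * t ^ q ≤ t ^ p :=
    rpow_mul_rpow_le_rpow hℓ ((pow_le_one_iff_of_nonneg hℓ.le hn.ne').1 hℓn) ht hp0 hpq.le
      (mul_sub_div_le_of_div_le_one_add_div (Nat.cast_pos.2 hn) hp0 hgap) hLp
  calc ∫⁻ x in Q, ENNReal.ofReal (doublePhase p q (a x) t)
      ≤ ∫⁻ x in Q, ENNReal.ofReal ((1 + C₀) * doublePhase p q A t) :=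
        setLIntegral_mono' measurableSet_cube fun x hx => ENNReal.ofReal_le_ofReal <|
          doublePhase_le_mul_doublePhase hp0 hpq.le hC₀.le hA ht
            (le_mul_sInf_image_cube_add_rpow hℓ.le hα.le hC₀ (hahold z ℓ hℓ hℓn) hx) hkey
    _ = ENNReal.ofReal (1 + C₀) * ENNReal.ofReal (ℓ ^ n * doublePhase p q A t) := by
        rw [setLIntegral_const, volume_cube hℓ.le, ← ENNReal.ofReal_mul' (by positivity),
          ← ENNReal.ofReal_mul (by positivity), mul_assoc, mul_comm (ℓ ^ n)]
    _ ≤ ENNReal.ofReal (1 + C₀) * ∫⁻ x in Q, ENNReal.ofReal (doublePhase p q A |f x|) := by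
        gcongr
        exact ofReal_pow_mul_doublePhase_le_setLIntegral_cube hp.le (by linarith) hA hℓ.le
          fun x => abs_nonneg (f x)
    _ ≤ ENNReal.ofReal (1 + C₀) * ∫⁻ x in Q, ENNReal.ofReal (doublePhase p q (a x) |f x|) := by
        gcongr ENNReal.ofReal _ * ?_
        exact setLIntegral_mono' measurableSet_cube fun x hx => ENNReal.ofReal_le_ofReal <|
          doublePhase_le_doublePhase_of_le (by linarith) (abs_nonneg _) <|
            csInf_le ⟨0, forall_mem_image.2 fun y _ => ha y⟩ (mem_image_of_mem a hx)

/-- Let `1 < p < q` with `q/p ≤ 1 + α/n` for some `α > 0`, and let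
`a ∈ L^∞` be nonnegative with `a(x) ≤ C₀(a(y) + |x−y|^α)` for all `x, y` in any
cube of measure at most 1. Then there is `C` (depending only on `n, p, q, α, C₀, ‖a‖_∞`)
such that for every cube `Q` with `|Q| ≤ 1` and every `f` with `‖f‖_{L^p} ≤ 1`,
`⨍_Q φ(x, ⨍_Q |f|) dx ≤ C·⨍_Q φ(x,|f(x)|) dx`, where
`φ(x,t) = (1/p)t^p + (1/q)a(x)t^q`. -/
theorem double_phase_jensen_small_cubes (n : ℕ) (hn : 0 < n) (p q α : ℝ)
    (hp : 1 < p) (hpq : p < q) (hα : 0 < α) (hgap : q / p ≤ 1 + α / n)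
    (C₀ M : ℝ) (hC₀ : 0 < C₀)
    (a : (Fin n → ℝ) → ℝ) (ha : ∀ x, 0 ≤ a x) (hameas : Measurable a)
    (haM : ∀ x, a x ≤ M)
    (hahold : ∀ (z : Fin n → ℝ) (ℓ : ℝ), 0 < ℓ → ℓ ^ n ≤ 1 →
      ∀ x ∈ cube n z ℓ, ∀ y ∈ cube n z ℓ, a x ≤ C₀ * (a y + ‖x - y‖ ^ α))
    (φ : (Fin n → ℝ) → ℝ → ℝ)
    (hφ : ∀ x t, φ x t = (1 / p) * t ^ p + (1 / q) * a x * t ^ q) :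
    ∃ C : ℝ, 0 < C ∧
      ∀ (f : (Fin n → ℝ) → ℝ), Measurable f → (∫⁻ x, ENNReal.ofReal (|f x| ^ p)) ≤ 1 →
      ∀ (z : Fin n → ℝ) (ℓ : ℝ), 0 < ℓ → ℓ ^ n ≤ 1 →
        (∫⁻ x in cube n z ℓ,
            ENNReal.ofReal (φ x ((ℓ ^ n)⁻¹ * ∫ y in cube n z ℓ, |f y|)))
          ≤ ENNReal.ofReal C *
            ∫⁻ x in cube n z ℓ, ENNReal.ofReal (φ x |f x|) :=
  double_phase_jensen_small_cubes_general n hn p q α hp hpq hα hgap C₀ hC₀ a ha hahold φ hφ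
end

section
/- Let {a_j}_{j≥1} be a sequence of nonnegative reals with ∑_{j=1}^∞ a_j ≤ 1. Suppose there exist c₀, β₀ > 0 such that ∑_{j=ℓ+1}^∞ a_j ≤ c₀·a_ℓ^{β₀} for all ℓ ∈ ℕ. Then ∑_{j=2ℓ}^∞ a_j ≤ c₀·ℓ^{−β₀} for all ℓ ∈ ℕ. -/
/-! Since the `ℓ` terms `a ℓ, …, a (2ℓ - 1)` sum to at most `1`, one of them, `a ℓ₁`, is at most
`1 / ℓ`; the tail from `2ℓ` lies inside the tail from `ℓ₁ + 1`, which the recursive bound controls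
by `c₀ a ℓ₁ ^ β₀ ≤ c₀ ℓ ^ (-β₀)`. -/

open Finset

theorem tsum_nat_add_le_of_le {f : ℕ → ℝ} (hf : Summable f) (hf₀ : ∀ j, 0 ≤ f j) {m n : ℕ}
    (hnm : n ≤ m) : ∑' j, f (j + m) ≤ ∑' j, f (j + n) := by
  obtain ⟨k, rfl⟩ := Nat.exists_eq_add_of_le hnm
  simpa only [Function.comp_def, add_assoc, add_comm k] using
    tsum_comp_le_tsum_of_inj ((summable_nat_add_iff n).mpr hf) (fun j => hf₀ _)
      (add_left_injective k)

theorem Finset.exists_le_inv_card_of_sum_le_one {ι : Type*} {s : Finset ι} (hs : s.Nonempty)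
    {f : ι → ℝ} (hf : ∑ i ∈ s, f i ≤ 1) : ∃ i ∈ s, f i ≤ (#s : ℝ)⁻¹ := by
  refine exists_le_of_sum_le hs ?_
  rw [sum_const, nsmul_eq_mul, mul_inv_cancel₀ (by exact_mod_cast hs.card_ne_zero)]
  exact hf

theorem sum_Ico_le_tsum_nat_add_one {f : ℕ → ℝ} (hf : Summable f) (hf₀ : ∀ j, 0 ≤ f j)
    {m n : ℕ} (hm : 1 ≤ m) : ∑ i ∈ Ico m n, f i ≤ ∑' j, f (j + 1) := by
  rw [sum_Ico_eq_sum_range]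
  calc ∑ k ∈ range (n - m), f (m + k)
      ≤ ∑' k, f (k + m) := by
        simpa only [add_comm m] using
          ((summable_nat_add_iff m).mpr hf).sum_le_tsum _ (fun k _ => hf₀ _)
    _ ≤ ∑' j, f (j + 1) := tsum_nat_add_le_of_le hf hf₀ hm

/-- Lemma 3.4: Let `(a_j)_{j ≥ 1}` be nonnegative reals with
`∑_{j=1}^∞ a_j ≤ 1`. If there are `c₀, β₀ > 0` with
`∑_{j=ℓ+1}^∞ a_j ≤ c₀·a_ℓ^{β₀}` for all `ℓ ≥ 1`, then
`∑_{j=2ℓ}^∞ a_j ≤ c₀·ℓ^{−β₀}` for all `ℓ ≥ 1`. -/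
theorem sequence_tail_decay (a : ℕ → ℝ) (ha : ∀ j, 0 ≤ a j)
    (hsum : Summable a) (htotal : (∑' j : ℕ, a (j + 1)) ≤ 1)
    (c₀ β₀ : ℝ) (hc₀ : 0 < c₀) (hβ₀ : 0 < β₀)
    (hrec : ∀ ℓ : ℕ, 1 ≤ ℓ → (∑' j : ℕ, a (j + ℓ + 1)) ≤ c₀ * (a ℓ) ^ β₀) :
    ∀ ℓ : ℕ, 1 ≤ ℓ → (∑' j : ℕ, a (j + 2 * ℓ)) ≤ c₀ * (ℓ : ℝ) ^ (-β₀) := by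
  intro ℓ hℓ
  obtain ⟨ℓ₁, hℓ₁, hsmall⟩ := exists_le_inv_card_of_sum_le_one
    (nonempty_Ico.mpr (by omega : ℓ < 2 * ℓ))
    ((sum_Ico_le_tsum_nat_add_one hsum ha hℓ).trans htotal)
  rw [Nat.card_Ico, show 2 * ℓ - ℓ = ℓ by omega] at hsmall
  rw [mem_Ico] at hℓ₁
  calc ∑' j, a (j + 2 * ℓ)
      ≤ ∑' j, a (j + (ℓ₁ + 1)) := tsum_nat_add_le_of_le hsum ha (by omega)
    _ ≤ c₀ * a ℓ₁ ^ β₀ := by simpa only [add_assoc] using hrec ℓ₁ (hℓ.trans hℓ₁.1)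
    _ ≤ c₀ * ((ℓ : ℝ)⁻¹) ^ β₀ := by gcongr; exact ha ℓ₁
    _ = c₀ * (ℓ : ℝ) ^ (-β₀) := by
      rw [Real.inv_rpow (Nat.cast_nonneg ℓ), Real.rpow_neg (Nat.cast_nonneg ℓ)]
end

section
/- Let L > 1, ϑ ∈ (0,1), q > 0, c₀ > 0, r > 0, and let (V_k)_{k≥0} be a sequence of nonnegative reals. Let Φ be an increasing bijection of [0,∞) satisfying Φ^{-1}(L^{-q/ϑ·k} V₀) ≤ L^{-k/ϑ} Φ^{-1}(V₀) for all k ≥ 0, and let λ_∞ be chosen so that Φ^{-1}(V₀) = c₀^{-1/ϑ} L^{-q/ϑ²} λ_∞/r. Suppose V_{k+1} ≤ c₀ L^k V_k (Φ^{-1}(V_k)·r/λ_∞)^ϑ for all k ≥ 0. Then V_k ≤ L^{-(q/ϑ)k} V₀ for all k ≥ 0; in particular V_k → 0. -/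
/-- abstract De Giorgi iteration: Let `L > 1`, `ϑ ∈ (0,1)`, `q > 0`,
`c₀ > 0`, and `(V_k)` nonnegative with
`V_{k+1} ≤ c₀·L^k·V_k·(Φ⁻¹(V_k)·r/λ_∞)^ϑ`, where `Φ⁻¹` is monotone (the inverse of
an increasing bijection of `[0,∞)`) and satisfies
`Φ⁻¹(L^{-(q/ϑ)k}·V₀) ≤ L^{-k/ϑ}·Φ⁻¹(V₀)` for all `k`, and `λ_∞` is chosen so that
`Φ⁻¹(V₀) = c₀^{-1/ϑ}·L^{-q/ϑ²}·λ_∞/r`. Then `V_k ≤ L^{-(q/ϑ)k}·V₀` for all `k`;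
in particular `V_k → 0`. -/
theorem de_giorgi_iteration (L ϑ q c₀ r lam : ℝ)
    (hL : 1 < L) (hϑ : ϑ ∈ Set.Ioo (0 : ℝ) 1) (hq : 0 < q)
    (hc₀ : 0 < c₀) (hr : 0 < r) (hlam : 0 < lam)
    (V : ℕ → ℝ) (hV : ∀ k, 0 ≤ V k)
    (Φinv : ℝ → ℝ)
    (hΦmono : MonotoneOn Φinv (Set.Ici 0))
    (hΦnonneg : ∀ u, 0 ≤ u → 0 ≤ Φinv u)
    (hkey : ∀ k : ℕ,
      Φinv (L ^ (-(q / ϑ) * (k : ℝ)) * V 0) ≤ L ^ (-(1 / ϑ) * (k : ℝ)) * Φinv (V 0))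
    (hrec : ∀ k : ℕ,
      V (k + 1) ≤ c₀ * L ^ (k : ℝ) * V k * (Φinv (V k) * r / lam) ^ ϑ)
    (hlamchoice : Φinv (V 0) = c₀ ^ (-(1 / ϑ)) * L ^ (-(q / ϑ ^ 2)) * (lam / r)) :
    (∀ k : ℕ, V k ≤ L ^ (-(q / ϑ) * (k : ℝ)) * V 0) ∧
      Filter.Tendsto V Filter.atTop (nhds 0) := by
  have hL0 : (0 : ℝ) < L := lt_trans one_pos hL
  have hϑ0 : (0 : ℝ) < ϑ := hϑ.1
  have hϑne : ϑ ≠ 0 := ne_of_gt hϑ0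
  have main : ∀ k : ℕ, V k ≤ L ^ (-(q / ϑ) * (k : ℝ)) * V 0 := by
    intro k
    induction k with
    | zero => simp
    | succ k ih =>
      have hmem1 : V k ∈ Set.Ici (0 : ℝ) := hV k
      have hmem2 : L ^ (-(q / ϑ) * (k : ℝ)) * V 0 ∈ Set.Ici (0 : ℝ) :=
        mul_nonneg (Real.rpow_nonneg hL0.le _) (hV 0)
      have h1 : Φinv (V k) ≤ L ^ (-(1 / ϑ) * (k : ℝ)) * Φinv (V 0) :=
        (hΦmono hmem1 hmem2 ih).trans (hkey k)
      have hXnn : 0 ≤ Φinv (V k) * r / lam :=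
        div_nonneg (mul_nonneg (hΦnonneg _ (hV k)) hr.le) hlam.le
      have hX : Φinv (V k) * r / lam ≤
          L ^ (-(1 / ϑ) * (k : ℝ)) * (c₀ ^ (-(1 / ϑ)) * L ^ (-(q / ϑ ^ 2))) := by
        have : Φinv (V k) * r / lam ≤
            (L ^ (-(1 / ϑ) * (k : ℝ)) * Φinv (V 0)) * r / lam := by
          gcongr
        refine this.trans_eq ?_
        rw [hlamchoice]
        field_simp
      have hXpow : (Φinv (V k) * r / lam) ^ ϑ ≤
          L ^ (-(k : ℝ)) * (c₀ ^ (-(1 : ℝ)) * L ^ (-(q / ϑ))) := by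
        have h2 := Real.rpow_le_rpow hXnn hX hϑ0.le
        refine h2.trans_eq ?_
        rw [Real.mul_rpow (Real.rpow_nonneg hL0.le _)
            (mul_nonneg (Real.rpow_nonneg hc₀.le _) (Real.rpow_nonneg hL0.le _)),
          Real.mul_rpow (Real.rpow_nonneg hc₀.le _) (Real.rpow_nonneg hL0.le _),
          ← Real.rpow_mul hL0.le, ← Real.rpow_mul hc₀.le,
          ← Real.rpow_mul hL0.le,
          show -(1 / ϑ) * (k : ℝ) * ϑ = -(k : ℝ) by field_simp,
          show -(1 / ϑ) * ϑ = -(1 : ℝ) by field_simp,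
          show -(q / ϑ ^ 2) * ϑ = -(q / ϑ) by field_simp]
      have hmid : c₀ * L ^ (k : ℝ) * V k * (Φinv (V k) * r / lam) ^ ϑ ≤
          c₀ * L ^ (k : ℝ) * (L ^ (-(q / ϑ) * (k : ℝ)) * V 0) *
            (L ^ (-(k : ℝ)) * (c₀ ^ (-(1 : ℝ)) * L ^ (-(q / ϑ)))) := by
        have hnn : 0 ≤ c₀ * L ^ (k : ℝ) :=
          mul_nonneg hc₀.le (Real.rpow_nonneg hL0.le _)
        exact mul_le_mul (by gcongr) hXpow (Real.rpow_nonneg hXnn _)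
          (mul_nonneg hnn (mul_nonneg (Real.rpow_nonneg hL0.le _) (hV 0)))
      refine ((hrec k).trans hmid).trans_eq ?_
      push_cast
      rw [Real.rpow_neg_one,
        show (-(q / ϑ) * ((k : ℝ) + 1)) = (k : ℝ) + -(q / ϑ) * (k : ℝ) + -(k : ℝ) + -(q / ϑ)
          by ring,
        Real.rpow_add hL0, Real.rpow_add hL0, Real.rpow_add hL0]
      field_simp
  refine ⟨main, ?_⟩
  have hlt : L ^ (-(q / ϑ)) < 1 :=
    Real.rpow_lt_one_of_one_lt_of_neg hL (neg_lt_zero.mpr (div_pos hq hϑ0))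
  have hbound : ∀ k : ℕ, V k ≤ (L ^ (-(q / ϑ))) ^ k * V 0 := by
    intro k
    have := main k
    rwa [show (-(q / ϑ) * (k : ℝ)) = (-(q / ϑ)) * (k : ℝ) by ring,
      Real.rpow_mul hL0.le, Real.rpow_natCast] at this
  have htend : Filter.Tendsto (fun k : ℕ => (L ^ (-(q / ϑ))) ^ k * V 0)
      Filter.atTop (nhds 0) := by
    have := (tendsto_pow_atTop_nhds_zero_of_lt_one
      (Real.rpow_nonneg hL0.le _) hlt).mul_const (V 0)
    simpa using this
  exact squeeze_zero hV hbound htend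
end
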